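/- arXiv:2206.12184 — 2 statements merged into one kernel-verified Lean document; each statement's English description precedes it below -/
import Mathlib

section
/- Let X be a Poisson random variable with mean α/m. Then for every n≥0, E[(mX+1)_{n,λ}] = Σ_{k=0}^n C(n,k) (1)_{n-k,λ} m^k φ_{k,λ/m}(α/m) = Σ_{j=0}^n α^j Σ_{k=j}^n C(n,k) (1)_{n-k,λ} m^{k-j} S_{2,λ/m}(k,j). -/
open Finset

/-- Degenerate falling factorial `(x)_{n,λ} = x(x-λ)⋯(x-(n-1)λ)`. -/
noncomputable def dfall (lam x : ℝ) (n : ℕ) : ℝ := ∏ i ∈ Finset.range n, (x - i * lam)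

/-- Ordinary falling factorial `(x)_n = x(x-1)⋯(x-n+1)`. -/
noncomputable def ffall (x : ℝ) (n : ℕ) : ℝ := ∏ i ∈ Finset.range n, (x - i)


open Nat Real

/-!
The degenerate falling factorials are of binomial type, and scaling gives
`(m x)_{k,λ} = m^k (x)_{k,λ/m}`; hence
`(mX+1)_{n,λ} = ∑ C(n,k) (1)_{n-k,λ} m^k (X)_{k,λ/m}`. Expanding `(X)_{k,λ/m}` in ordinary
falling factorials and using that a Poisson variable of mean `t` has factorial moments
`E[(X)_j] = t^j` turns `E[(X)_{k,λ/m}]` into the degenerate Bell polynomial `φ_{k,λ/m}(t)`.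
The second formula is the same double sum, reordered after substituting `t = α/m`.
-/

theorem dfall_succ (lam x : ℝ) (n : ℕ) : dfall lam x (n + 1) = dfall lam x n * (x - n * lam) :=
  prod_range_succ _ _

theorem dfall_add (lam x y : ℝ) (n : ℕ) :
    dfall lam (x + y) n =
      ∑ ij ∈ antidiagonal n, (n.choose ij.1 : ℝ) * (dfall lam x ij.1 * dfall lam y ij.2) := by
  induction n with
  | zero => simp [dfall]
  | succ n ih =>
    rw [sum_antidiagonal_choose_succ_mul (fun i j => dfall lam x i * dfall lam y j),
      ← sum_add_distrib, dfall_succ, ih, sum_mul]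
    -- on the antidiagonal `i + j = n`, `x + y - nλ = (x - iλ) + (y - jλ)`
    refine sum_congr rfl fun ij hij => ?_
    have hn : (n : ℝ) = ij.1 + ij.2 := by exact_mod_cast (mem_antidiagonal.mp hij).symm
    rw [← Nat.choose_symm_of_eq_add (mem_antidiagonal.mp hij).symm, dfall_succ, dfall_succ, hn]
    ring

theorem dfall_mul (lam c x : ℝ) (hc : c ≠ 0) (n : ℕ) :
    dfall lam (c * x) n = c ^ n * dfall (lam / c) x n := by
  have hpow : c ^ n = ∏ _i ∈ range n, c := by simp
  rw [dfall, dfall, hpow, ← prod_mul_distrib]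
  exact prod_congr rfl fun i _ => by field_simp

theorem dfall_mul_add_one (lam c x : ℝ) (hc : c ≠ 0) (n : ℕ) :
    dfall lam (c * x + 1) n =
      ∑ j ∈ range (n + 1), (n.choose j * dfall lam 1 (n - j) * c ^ j) * dfall (lam / c) x j := by
  rw [dfall_add, Nat.sum_antidiagonal_eq_sum_range_succ
    (fun i j => (n.choose i : ℝ) * (dfall lam (c * x) i * dfall lam 1 j))]
  exact sum_congr rfl fun j _ => by rw [dfall_mul lam c x hc]; ring

theorem ffall_natCast (k i : ℕ) : ffall k i = k.descFactorial i := by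
  rw [ffall, ← descPochhammer_eval_eq_prod_range, descPochhammer_eval_eq_descFactorial]

theorem hasSum_ffall_mul_pow_div_factorial (t : ℝ) (i : ℕ) :
    HasSum (fun k : ℕ => ffall k i * t ^ k / k !) (t ^ i * exp t) := by
  have hvanish : ∑ k ∈ range i, ffall k i * t ^ k / k ! = 0 :=
    sum_eq_zero fun k hk => by
      rw [ffall_natCast, descFactorial_eq_zero_iff_lt.mpr (mem_range.mp hk)]; simp
  have hshift (j : ℕ) : ffall ↑(j + i) i * t ^ (j + i) / (j + i)! = t ^ i * (t ^ j / j !) := by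
    have hfac : ((j + i)! : ℝ) = j ! * (j + i).descFactorial i := by
      exact_mod_cast (Nat.add_sub_cancel j i ▸ factorial_mul_descFactorial (le_add_left i j)).symm
    have hdesc : ((j + i).descFactorial i : ℝ) ≠ 0 := by
      exact_mod_cast (descFactorial_pos.mpr (le_add_left i j)).ne'
    rw [ffall_natCast, hfac, pow_add]
    field_simp
  rw [← hasSum_nat_add_iff' i, hvanish, sub_zero]
  simp only [hshift]
  rw [Real.exp_eq_exp_ℝ]
  exact (NormedSpace.expSeries_div_hasSum_exp t).mul_left (t ^ i)

theorem hasSum_mul_pow_div_factorial_of_eq_sum {ι : Type*} (t : ℝ) (s : Finset ι) (c : ι → ℝ)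
    {f : ℕ → ℝ} {g : ι → ℕ → ℝ} {a : ι → ℝ} (hf : ∀ k, f k = ∑ i ∈ s, c i * g i k)
    (hg : ∀ i ∈ s, HasSum (fun k : ℕ => g i k * t ^ k / k !) (a i * exp t)) :
    HasSum (fun k : ℕ => f k * t ^ k / k !) ((∑ i ∈ s, c i * a i) * exp t) := by
  have hterm : (fun k : ℕ => f k * t ^ k / k !) =
      fun k => ∑ i ∈ s, c i * (g i k * t ^ k / k !) :=
    funext fun k => by simp only [hf, sum_mul, sum_div, mul_assoc, mul_div_assoc]
  rw [hterm, sum_mul]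
  simpa only [mul_assoc] using hasSum_sum fun i hi => (hg i hi).mul_left (c i)

theorem hasSum_dfall_mul_pow_div_factorial (μ t : ℝ) (S : ℕ → ℕ → ℝ)
    (hS : ∀ (x : ℝ) (N : ℕ), dfall μ x N = ∑ k ∈ range (N + 1), S N k * ffall x k) (j : ℕ) :
    HasSum (fun k : ℕ => dfall μ k j * t ^ k / k !)
      ((∑ i ∈ range (j + 1), S j i * t ^ i) * exp t) :=
  hasSum_mul_pow_div_factorial_of_eq_sum t _ _ (fun k => hS k j)
    fun i _ => hasSum_ffall_mul_pow_div_factorial t i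

theorem exp_neg_mul_tsum_eq_of_hasSum {t a : ℝ} {f : ℕ → ℝ}
    (hf : HasSum (fun k : ℕ => f k * t ^ k / k !) (a * exp t)) :
    exp (-t) * ∑' k : ℕ, f k * t ^ k / k ! = a := by
  rw [hf.tsum_eq, mul_left_comm, ← exp_add, neg_add_cancel, exp_zero, mul_one]

theorem sum_mul_pow_mul_sum_div_pow (b : ℕ → ℝ) (S : ℕ → ℕ → ℝ) (α c : ℝ) (hc : c ≠ 0)
    (n : ℕ) :
    ∑ k ∈ range (n + 1), b k * c ^ k * ∑ j ∈ range (k + 1), S k j * (α / c) ^ j =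
      ∑ j ∈ range (n + 1), α ^ j * ∑ k ∈ Icc j n, b k * c ^ (k - j) * S k j := by
  simp_rw [mul_sum]
  rw [sum_comm' (t' := range (n + 1)) (s' := fun j => Icc j n)
    (by intro k j; simp only [mem_range, mem_Icc]; omega)]
  refine sum_congr rfl fun j _ => sum_congr rfl fun k hk => ?_
  obtain ⟨d, rfl⟩ := Nat.exists_eq_add_of_le (mem_Icc.mp hk).1
  rw [Nat.add_sub_cancel_left, pow_add, div_pow]
  field_simp

theorem stmt3_general (m : ℕ) (hm : 0 < m) (α lam : ℝ)
    (S : ℕ → ℕ → ℝ)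
    (hS : ∀ (x : ℝ) (N : ℕ),
      dfall (lam / m) x N = ∑ k ∈ Finset.range (N + 1), S N k * ffall x k)
    (n : ℕ) :
    (Real.exp (-(α / m)) *
        ∑' k : ℕ, dfall lam ((m : ℝ) * k + 1) n * (α / m) ^ k / (Nat.factorial k)
      = ∑ k ∈ Finset.range (n + 1), (n.choose k : ℝ) * dfall lam 1 (n - k) * (m : ℝ) ^ k *
          (∑ j ∈ Finset.range (k + 1), S k j * (α / m) ^ j)) ∧
    (Real.exp (-(α / m)) *
        ∑' k : ℕ, dfall lam ((m : ℝ) * k + 1) n * (α / m) ^ k / (Nat.factorial k)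
      = ∑ j ∈ Finset.range (n + 1), α ^ j *
          ∑ k ∈ Finset.Icc j n, (n.choose k : ℝ) * dfall lam 1 (n - k) * (m : ℝ) ^ (k - j) * S k j) := by
  have hm0 : (m : ℝ) ≠ 0 := by positivity
  have hmean := hasSum_mul_pow_div_factorial_of_eq_sum (α / m) (range (n + 1)) _
    (fun k : ℕ => dfall_mul_add_one lam m k hm0 n)
    fun j _ => hasSum_dfall_mul_pow_div_factorial _ (α / m) S hS j
  have hfirst := exp_neg_mul_tsum_eq_of_hasSum hmean
  exact ⟨hfirst, hfirst.trans (sum_mul_pow_mul_sum_div_pow _ S α m hm0 n)⟩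

theorem stmt3 (m : ℕ) (hm : 0 < m) (α lam : ℝ) (hα : 0 < α) (hlam : lam ≠ 0)
    (S : ℕ → ℕ → ℝ)
    (hS : ∀ (x : ℝ) (N : ℕ),
      dfall (lam / m) x N = ∑ k ∈ Finset.range (N + 1), S N k * ffall x k)
    (n : ℕ) :
    (Real.exp (-(α / m)) *
        ∑' k : ℕ, dfall lam ((m : ℝ) * k + 1) n * (α / m) ^ k / (Nat.factorial k)
      = ∑ k ∈ Finset.range (n + 1), (n.choose k : ℝ) * dfall lam 1 (n - k) * (m : ℝ) ^ k *
          (∑ j ∈ Finset.range (k + 1), S k j * (α / m) ^ j)) ∧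
    (Real.exp (-(α / m)) *
        ∑' k : ℕ, dfall lam ((m : ℝ) * k + 1) n * (α / m) ^ k / (Nat.factorial k)
      = ∑ j ∈ Finset.range (n + 1), α ^ j *
          ∑ k ∈ Finset.Icc j n, (n.choose k : ℝ) * dfall lam 1 (n - k) * (m : ℝ) ^ (k - j) * S k j) :=
  stmt3_general m hm α lam S hS n
end

section
/- For n ≥ 0, D^{(r)}_{m,λ}(n,α) = m^n Σ_{k=0}^n C_k(r/m; -α/m) S_{2,λ/m}(n,k), where C_k(x;β) are the Charlier polynomials. -/
/-!
Put `h(t) = (1 + λt)^{m/λ} - 1` and `g(u) = e^{αu/m} (1 + u)^{r/m}`, so that the generating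
function of `D` is `g ∘ h` and `g` is the generating function of the Charlier numbers `C k`.
Because `h 0 = 0`, the `n`-th derivative of `g ∘ h` at `0` only sees the Taylor polynomial of `g`
of degree `n`: `D n = ∑ₖ C k / k! · (hᵏ)⁽ⁿ⁾(0)`.
The same expansion for `g(u) = (1 + u)^x`, where `(1 + h(t))^x = (1 + λt)^{mx/λ}`, gives
`mⁿ (x)_{n,λ/m} = ∑ₖ (x)ₖ (hᵏ)⁽ⁿ⁾(0) / k!` for every `x`. Falling factorials are linearly
independent (evaluate at `x = 0, 1, …`), so comparing with the expansion defining `S n k` yields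
`(hᵏ)⁽ⁿ⁾(0) = k! mⁿ S n k`.
-/

open Finset

open Set Filter
open scoped Nat ContDiff Topology

section Composition

variable {𝕜 : Type*} [NontriviallyNormedField 𝕜]

theorem ContDiffOn.contDiffAt_of_isOpen {E F : Type*} [NormedAddCommGroup E] [NormedSpace 𝕜 E]
    [NormedAddCommGroup F] [NormedSpace 𝕜 F] {f : E → F} {s : Set E} (hf : ContDiffOn 𝕜 ∞ f s)
    (hs : IsOpen s) {x : E} (hx : x ∈ s) (n : ℕ) : ContDiffAt 𝕜 n f x :=
  (hf.contDiffAt (hs.mem_nhds hx)).of_le (mod_cast le_top)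

theorem iteratedDeriv_comp_mul_left (f : 𝕜 → 𝕜) (c : 𝕜) (n : ℕ) :
    iteratedDeriv n (fun t => f (c * t)) = fun t => c ^ n * iteratedDeriv n f (c * t) := by
  induction n with
  | zero => simp
  | succ n ih =>
    funext t
    rw [iteratedDeriv_succ, ih, deriv_const_mul_field', iteratedDeriv_succ]
    simp only [deriv_comp_mul_left, smul_eq_mul]
    ring

/- The factor `ψ` makes the statement stable under differentiation, which the induction needs. -/
theorem iteratedDeriv_comp_mul_eq_zero {U V : Set 𝕜} (hU : IsOpen U) (hV : IsOpen V)
    {h : 𝕜 → 𝕜} (hh : ContDiffOn 𝕜 ∞ h U) (hUV : MapsTo h U V) {a : 𝕜} (ha : a ∈ U) (n : ℕ) :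
    ∀ {G ψ : 𝕜 → 𝕜}, ContDiffOn 𝕜 ∞ G V → ContDiffOn 𝕜 ∞ ψ U →
      (∀ i ≤ n, iteratedDeriv i G (h a) = 0) →
      iteratedDeriv n (fun t => G (h t) * ψ t) a = 0 := by
  induction n with
  | zero =>
    intro G ψ _ _ hG0
    simpa using Or.inl (hG0 0 le_rfl)
  | succ n ih =>
    intro G ψ hG hψ hG0
    have hG' := hG.deriv_of_isOpen hV (m := ∞) le_rfl
    have hψ' := hψ.deriv_of_isOpen hU (m := ∞) le_rfl
    have hh' := hh.deriv_of_isOpen hU (m := ∞) le_rfl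
    have hderiv : deriv (fun t => G (h t) * ψ t) =ᶠ[𝓝 a]
        fun t => deriv G (h t) * (deriv h t * ψ t) + G (h t) * deriv ψ t := by
      filter_upwards [hU.mem_nhds ha] with t ht
      have hGt := (hG.contDiffAt_of_isOpen hV (hUV ht) 1).differentiableAt one_ne_zero
      have hht := (hh.contDiffAt_of_isOpen hU ht 1).differentiableAt one_ne_zero
      have hψt := (hψ.contDiffAt_of_isOpen hU ht 1).differentiableAt one_ne_zero
      exact ((hGt.hasDerivAt.comp t hht.hasDerivAt).mul hψt.hasDerivAt).deriv.trans
        (by rw [Function.comp_apply]; ring)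
    have hfirst : iteratedDeriv n (fun t => deriv G (h t) * (deriv h t * ψ t)) a = 0 :=
      ih hG' (hh'.mul hψ) fun i hi => by
        rw [← iteratedDeriv_succ']
        exact hG0 (i + 1) (by omega)
    have hsecond : iteratedDeriv n (fun t => G (h t) * deriv ψ t) a = 0 :=
      ih hG hψ' fun i hi => hG0 i (by omega)
    have hhn := hh.contDiffAt_of_isOpen hU ha n
    rw [iteratedDeriv_succ', hderiv.iteratedDeriv_eq, iteratedDeriv_fun_add, hfirst, hsecond,
      add_zero]
    · exact ((hG'.contDiffAt_of_isOpen hV (hUV ha) n).comp a hhn).mul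
        ((hh'.contDiffAt_of_isOpen hU ha n).mul (hψ.contDiffAt_of_isOpen hU ha n))
    · exact ((hG.contDiffAt_of_isOpen hV (hUV ha) n).comp a hhn).mul
        (hψ'.contDiffAt_of_isOpen hU ha n)

theorem iteratedDeriv_comp_eq_sum [CharZero 𝕜] {U V : Set 𝕜} (hU : IsOpen U) (hV : IsOpen V)
    {h g : 𝕜 → 𝕜} (hh : ContDiffOn 𝕜 ∞ h U) (hUV : MapsTo h U V) (hU0 : (0 : 𝕜) ∈ U)
    (hh0 : h 0 = 0) (hg : ContDiffOn 𝕜 ∞ g V) (n : ℕ) :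
    iteratedDeriv n (fun t => g (h t)) 0 =
      ∑ k ∈ range (n + 1), iteratedDeriv k g 0 / k ! * iteratedDeriv n (fun t => h t ^ k) 0 := by
  set P : 𝕜 → 𝕜 := fun u => ∑ k ∈ range (n + 1), iteratedDeriv k g 0 / k ! * u ^ k
  have hP : ContDiff 𝕜 ∞ P := by fun_prop
  have hV0 : (0 : 𝕜) ∈ V := hh0 ▸ hUV hU0
  have hgP : ∀ i ≤ n, iteratedDeriv i (fun u => g u - P u) 0 = 0 := by
    intro i hi
    rw [iteratedDeriv_fun_sub (hg.contDiffAt_of_isOpen hV hV0 i)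
        (hP.contDiffAt.of_le (mod_cast le_top)),
      iteratedDeriv_fun_sum fun k _ => by fun_prop]
    simp only [iteratedDeriv_const_mul_field, iteratedDeriv_fun_pow_zero, Nat.cast_ite,
      Nat.cast_zero, mul_ite, mul_zero]
    rw [sum_ite_eq, if_pos (Finset.mem_range.2 (by omega)),
      div_mul_cancel₀ _ (mod_cast i.factorial_ne_zero), sub_self]
  have hvanish := iteratedDeriv_comp_mul_eq_zero hU hV hh hUV hU0 n (hg.sub hP.contDiffOn)
    (contDiffOn_const (c := (1 : 𝕜))) (by rwa [hh0])
  have hhn := hh.contDiffAt_of_isOpen hU hU0 n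
  have hgh : ContDiffAt 𝕜 n (fun t => g (h t)) 0 :=
    (hg.contDiffAt_of_isOpen hV (hUV hU0) n).comp 0 hhn
  have hPh : ContDiffAt 𝕜 n (fun t => P (h t)) 0 :=
    (hP.contDiffAt.of_le (mod_cast le_top)).comp 0 hhn
  simp only [mul_one] at hvanish
  rw [iteratedDeriv_fun_sub hgh hPh, sub_eq_zero] at hvanish
  rw [hvanish, iteratedDeriv_fun_sum fun k _ => by fun_prop]
  simp only [iteratedDeriv_const_mul_field]

end Composition

theorem ffall_eq_descPochhammer_eval (x : ℝ) (n : ℕ) :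
    ffall x n = (descPochhammer ℝ n).eval x := by
  rw [descPochhammer_eval_eq_prod_range]
  rfl

theorem ffall_natCast_s14 (j k : ℕ) : ffall j k = j.descFactorial k := by
  rw [ffall_eq_descPochhammer_eval, descPochhammer_eval_eq_descFactorial]

theorem eq_of_sum_mul_ffall_eq {n : ℕ} {a b : ℕ → ℝ}
    (h : ∀ x, ∑ k ∈ range (n + 1), a k * ffall x k = ∑ k ∈ range (n + 1), b k * ffall x k) :
    ∀ k ≤ n, a k = b k := by
  intro k
  induction k using Nat.strong_induction_on with
  | _ k ih =>
    intro hk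
    have hk' := h k
    rw [← sub_eq_zero, ← sum_sub_distrib,
      sum_eq_single_of_mem k (Finset.mem_range.2 (by omega))] at hk'
    · rw [← sub_mul, ffall_natCast_s14, Nat.descFactorial_self, mul_eq_zero, sub_eq_zero] at hk'
      exact hk'.resolve_right (mod_cast k.factorial_ne_zero)
    · intro j _ hjk
      rcases hjk.lt_or_gt with hjk | hjk
      · rw [ih j hjk (by omega), sub_self]
      · rw [ffall_natCast_s14, Nat.descFactorial_eq_zero_iff_lt.2 hjk]
        simp

theorem dfall_eq_pow_mul_ffall_div {lam : ℝ} (hlam : lam ≠ 0) (x : ℝ) (n : ℕ) :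
    dfall lam x n = lam ^ n * ffall (x / lam) n := by
  have hpow := pow_card_mul_prod (s := range n) (b := lam) (f := fun i : ℕ => x / lam - i)
  rw [card_range] at hpow
  rw [dfall, ffall, hpow]
  exact prod_congr rfl fun i _ => by field_simp

theorem dfall_mul_left {c : ℝ} (hc : c ≠ 0) (lam x : ℝ) (n : ℕ) :
    dfall lam (c * x) n = c ^ n * dfall (lam / c) x n := by
  have hpow := pow_card_mul_prod (s := range n) (b := c) (f := fun i : ℕ => x - i * (lam / c))
  rw [card_range] at hpow
  rw [dfall, dfall, hpow]
  exact prod_congr rfl fun i _ => by field_simp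

theorem iteratedDeriv_one_add_mul_rpow_zero (a c : ℝ) (n : ℕ) :
    iteratedDeriv n (fun t : ℝ => (1 + a * t) ^ c) 0 = a ^ n * ffall c n := by
  rw [iteratedDeriv_comp_mul_left (fun u : ℝ => (1 + u) ^ c),
    iteratedDeriv_comp_const_add n (fun u : ℝ => u ^ c), iteratedDeriv_eq_iterate]
  simp [Real.iter_deriv_rpow_const, ffall_eq_descPochhammer_eval]

theorem contDiffOn_one_add_mul_rpow (a c : ℝ) :
    ContDiffOn ℝ ∞ (fun t : ℝ => (1 + a * t) ^ c) {t | 0 < 1 + a * t} :=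
  fun _ ht => ((contDiffAt_const.add (contDiffAt_const.mul contDiffAt_id)).rpow_const_of_ne
    ht.ne').contDiffWithinAt

theorem eventually_one_add_mul_pos (a : ℝ) : ∀ᶠ t in 𝓝 (0 : ℝ), 0 < 1 + a * t :=
  (isOpen_lt continuous_const (by fun_prop)).mem_nhds (by simp)

/-- The degenerate exponential `e_λ^x(t)`. -/
noncomputable def degExp (lam x t : ℝ) : ℝ := (1 + lam * t) ^ (x / lam)

theorem iteratedDeriv_degExp_zero {lam : ℝ} (hlam : lam ≠ 0) (x : ℝ) (n : ℕ) :
    iteratedDeriv n (degExp lam x) 0 = dfall lam x n := by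
  rw [dfall_eq_pow_mul_ffall_div hlam, ← iteratedDeriv_one_add_mul_rpow_zero]
  rfl

theorem degExp_rpow {lam t : ℝ} (ht : 0 < 1 + lam * t) (m x : ℝ) :
    degExp lam m t ^ x = degExp lam (m * x) t := by
  rw [degExp, degExp, ← Real.rpow_mul ht.le, div_mul_eq_mul_div]

theorem iteratedDeriv_comp_degExp_sub_one {g : ℝ → ℝ} (hg : ContDiffOn ℝ ∞ g {u | 0 < 1 + u})
    (lam m : ℝ) (n : ℕ) :
    iteratedDeriv n (fun t => g (degExp lam m t - 1)) 0 =
      ∑ k ∈ range (n + 1),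
        iteratedDeriv k g 0 / k ! * iteratedDeriv n (fun t => (degExp lam m t - 1) ^ k) 0 := by
  refine iteratedDeriv_comp_eq_sum (isOpen_lt continuous_const (by fun_prop))
    (isOpen_lt continuous_const (by fun_prop))
    ((contDiffOn_one_add_mul_rpow _ _).sub contDiffOn_const) (fun t ht => ?_) (by simp) (by simp)
    hg n
  simpa [degExp] using Real.rpow_pos_of_pos ht _

theorem iteratedDeriv_degExp_sub_one_pow {lam m : ℝ} (hlam : lam ≠ 0) (hm : m ≠ 0) {n : ℕ}
    {s : ℕ → ℝ} (hs : ∀ x, dfall (lam / m) x n = ∑ k ∈ range (n + 1), s k * ffall x k)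
    {k : ℕ} (hk : k ≤ n) :
    iteratedDeriv n (fun t => (degExp lam m t - 1) ^ k) 0 = k ! * (m ^ n * s k) := by
  set A : ℕ → ℝ := fun k => iteratedDeriv n (fun t => (degExp lam m t - 1) ^ k) 0
  have hpow (x : ℝ) : ContDiffOn ℝ ∞ (fun u : ℝ => (1 + u) ^ x) {u | 0 < 1 + u} := by
    simpa using contDiffOn_one_add_mul_rpow 1 x
  have hpow_deriv (x : ℝ) (j : ℕ) :
      iteratedDeriv j (fun u : ℝ => (1 + u) ^ x) 0 = ffall x j := by
    simpa using iteratedDeriv_one_add_mul_rpow_zero 1 x j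
  have hcomp (x : ℝ) :
      (fun t => (1 + (degExp lam m t - 1)) ^ x) =ᶠ[𝓝 0] degExp lam (m * x) := by
    filter_upwards [eventually_one_add_mul_pos lam] with t ht
    rw [add_sub_cancel, degExp_rpow ht]
  have hcoeff (x : ℝ) : ∑ k ∈ range (n + 1), A k / k ! * ffall x k =
      ∑ k ∈ range (n + 1), m ^ n * s k * ffall x k :=
    calc ∑ k ∈ range (n + 1), A k / k ! * ffall x k
        = ∑ k ∈ range (n + 1), iteratedDeriv k (fun u : ℝ => (1 + u) ^ x) 0 / k ! * A k :=
          sum_congr rfl fun j _ => by rw [hpow_deriv]; ring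
      _ = iteratedDeriv n (degExp lam (m * x)) 0 := by
          rw [← iteratedDeriv_comp_degExp_sub_one (hpow x), (hcomp x).iteratedDeriv_eq]
      _ = ∑ k ∈ range (n + 1), m ^ n * s k * ffall x k := by
          simp only [iteratedDeriv_degExp_zero hlam, dfall_mul_left hm, hs, mul_sum, mul_assoc]
  have hAk := eq_of_sum_mul_ffall_eq hcoeff k hk
  rw [div_eq_iff (mod_cast k.factorial_ne_zero)] at hAk
  exact hAk.trans (mul_comm _ _)

theorem stmt14 (m : ℕ) (hm : 0 < m) (r : ℕ) (α lam : ℝ) (hlam : lam ≠ 0)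
    (D : ℕ → ℝ)
    (hD : ∀ n : ℕ, iteratedDeriv n
        (fun t : ℝ => (1 + lam * t) ^ ((r : ℝ) / lam) *
          Real.exp ((α / m) * ((1 + lam * t) ^ ((m : ℝ) / lam) - 1))) 0 = D n)
    (C : ℕ → ℝ)
    (hC : ∀ k : ℕ, iteratedDeriv k
        (fun t : ℝ => Real.exp ((α / m) * t) * (1 + t) ^ ((r : ℝ) / m)) 0 = C k)
    (S : ℕ → ℕ → ℝ)
    (hS : ∀ (x : ℝ) (N : ℕ),
      dfall (lam / m) x N = ∑ k ∈ Finset.range (N + 1), S N k * ffall x k)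
    (n : ℕ) :
    D n = (m : ℝ) ^ n * ∑ k ∈ Finset.range (n + 1), C k * S n k := by
  have hm' : (m : ℝ) ≠ 0 := Nat.cast_ne_zero.2 hm.ne'
  set g : ℝ → ℝ := fun u => Real.exp ((α / m) * u) * (1 + u) ^ ((r : ℝ) / m)
  have hg : ContDiffOn ℝ ∞ g {u | 0 < 1 + u} :=
    (Real.contDiff_exp.comp (contDiff_const.mul contDiff_id)).contDiffOn.mul
      (by simpa using contDiffOn_one_add_mul_rpow 1 ((r : ℝ) / m))
  have hD' : iteratedDeriv n (fun t => g (degExp lam m t - 1)) 0 = D n := by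
    rw [← hD n]
    refine EventuallyEq.iteratedDeriv_eq n ?_
    filter_upwards [eventually_one_add_mul_pos lam] with t ht
    simp only [g, add_sub_cancel, degExp_rpow ht, mul_div_cancel₀ _ hm']
    exact mul_comm _ _
  rw [← hD', iteratedDeriv_comp_degExp_sub_one hg, mul_sum]
  refine sum_congr rfl fun k hk => ?_
  rw [hC, iteratedDeriv_degExp_sub_one_pow hlam hm' (hS · n)
    (Nat.lt_succ_iff.1 (Finset.mem_range.1 hk))]
  field_simp
end
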